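/- arXiv:2407.16847 — 7 statements merged into one kernel-verified Lean document; each statement's English description precedes it below -/
import Mathlib

section
/- Let X, s, κ, m, n be positive integers with X = κ·s and m ≥ n. Let P_X be the strided mask with stride X and let TB be a thread-block of size m×n with anchor (x₀, y₀) ∈ P_X and stretch factor s. Then |Cov(TB)| = ⌈(m−n+1)/κ⌉·n + Σ_{k=⌈(m−n+1)/κ⌉}^{⌈(m−1)/κ⌉} max(m − k·κ, 0) + Σ_{k=1}^{⌈(n−1)/κ⌉} max(n − k·κ, 0). -/
/-- The compute set of an `m × n` thread-block with anchor `(x₀, y₀)`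
and stretch factor `s`. -/
def Comp (x₀ y₀ s : ℤ) (m n : ℕ) : Set (ℤ × ℤ) :=
  {p | ∃ i j : ℕ, i < n ∧ j < m ∧ p = (x₀ + i * s, y₀ + j * s)}

/-- The strided mask with stride `X`. -/
def stridedMask (X : ℕ) : Set (ℤ × ℤ) :=
  {p | (X : ℤ) ∣ p.1 - p.2}

/-!
Because the anchor lies on the mask and `X = κ s`, the point `(x₀ + i s, y₀ + j s)` lies on
the mask iff `i ≡ j [MOD κ]`, so the cover is in bijection with the pairs
`(i, j) ∈ [0, n) × [0, m)` with `i ≡ j [MOD κ]`. These lie on the diagonals `j - i = k κ`: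
the diagonal `j = i + k κ` carries `min n (m - k κ)` pairs and `i = j + k κ` carries
`n - k κ`. Counting the pairs with `i ≤ j` and those with `j ≤ i` counts the main diagonal
(`n` pairs) twice. The ceilings are the thresholds at which the summands change shape:
`k κ ≤ m - n` exactly when `k < ⌈(m - n + 1) / κ⌉`, and `max (a - k κ) 0` vanishes once
`k > ⌈(a - 1) / κ⌉`.
-/

open Finset

lemma card_filter_snd_eq_fst_add (n m d : ℕ) :
    #{p ∈ range n ×ˢ range m | p.2 = p.1 + d} = min n (m - d) := by
  have : {p ∈ range n ×ˢ range m | p.2 = p.1 + d} =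
      (range (min n (m - d))).map ⟨fun i => (i, i + d), fun i j h => by simpa using h⟩ := by
    ext ⟨i, j⟩
    simp only [mem_filter, mem_product, mem_range, mem_map]
    constructor
    · rintro ⟨⟨hi, hj⟩, rfl⟩
      exact ⟨i, by omega, rfl⟩
    · rintro ⟨i, hi, rfl, rfl⟩
      omega
  rw [this, card_map, card_range]

lemma card_filter_le_modEq {κ : ℕ} (hκ : 0 < κ) (n m : ℕ) :
    #{p ∈ range n ×ˢ range m | p.1 ≤ p.2 ∧ p.1 ≡ p.2 [MOD κ]} =
      ∑ k ∈ range m, min n (m - k * κ) := by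
  have : {p ∈ range n ×ˢ range m | p.1 ≤ p.2 ∧ p.1 ≡ p.2 [MOD κ]} =
      (range m).biUnion fun k => {p ∈ range n ×ˢ range m | p.2 = p.1 + k * κ} := by
    ext ⟨i, j⟩
    simp only [mem_filter, mem_biUnion, mem_product, mem_range]
    constructor
    · rintro ⟨⟨hi, hj⟩, hij, hmod⟩
      obtain ⟨k, rfl⟩ := (Nat.modEq_iff_exists_eq_add hij).1 hmod
      exact ⟨k, by nlinarith, ⟨hi, hj⟩, by rw [mul_comm]⟩
    · rintro ⟨k, -, ⟨hi, hj⟩, rfl⟩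
      refine ⟨⟨hi, hj⟩, by omega, (Nat.modEq_iff_exists_eq_add (by omega)).2 ⟨k, ?_⟩⟩
      rw [mul_comm]
  rw [this, card_biUnion]
  · exact sum_congr rfl fun k _ => card_filter_snd_eq_fst_add n m _
  · intro k _ l _ hkl
    simp only [Function.onFun, disjoint_left, mem_filter]
    rintro p ⟨-, hp⟩ ⟨-, hq⟩
    exact hkl (Nat.eq_of_mul_eq_mul_right hκ (by omega))

lemma card_filter_modEq_add_min {κ : ℕ} (hκ : 0 < κ) (n m : ℕ) :
    #{p ∈ range n ×ˢ range m | p.1 ≡ p.2 [MOD κ]} + min n m =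
      ∑ k ∈ range m, min n (m - k * κ) + ∑ k ∈ range n, min m (n - k * κ) := by
  set S := {p ∈ range n ×ˢ range m | p.1 ≡ p.2 [MOD κ]}
  have hunion : {p ∈ S | p.1 ≤ p.2} ∪ {p ∈ S | p.2 ≤ p.1} = S := by
    rw [← filter_or]; exact filter_true_of_mem fun p _ => le_total _ _
  have hinter : {p ∈ S | p.1 ≤ p.2} ∩ {p ∈ S | p.2 ≤ p.1} =
      {p ∈ range n ×ˢ range m | p.2 = p.1 + 0} := by
    ext p; simp only [S, mem_inter, mem_filter]
    constructor
    · rintro ⟨⟨⟨hp, -⟩, h₁⟩, -, h₂⟩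
      exact ⟨hp, by omega⟩
    · rintro ⟨hp, h⟩
      have hmod : p.1 ≡ p.2 [MOD κ] := by rw [h, add_zero]
      exact ⟨⟨⟨hp, hmod⟩, by omega⟩, ⟨hp, hmod⟩, by omega⟩
  have hupper : #{p ∈ S | p.1 ≤ p.2} = ∑ k ∈ range m, min n (m - k * κ) := by
    rw [filter_filter, ← card_filter_le_modEq hκ]
    simp_rw [and_comm]
  have hlower : #{p ∈ S | p.2 ≤ p.1} = ∑ k ∈ range n, min m (n - k * κ) := by
    rw [filter_filter, ← card_filter_le_modEq hκ]
    refine card_equiv (Equiv.prodComm _ _) fun p => ?_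
    simp only [mem_filter, mem_product, Equiv.prodComm_apply, Prod.fst_swap, Prod.snd_swap]
    constructor
    · rintro ⟨⟨h₁, h₂⟩, h₃, h₄⟩
      exact ⟨⟨h₂, h₁⟩, h₄, h₃.symm⟩
    · rintro ⟨⟨h₁, h₂⟩, h₃, h₄⟩
      exact ⟨⟨h₂, h₁⟩, h₄.symm, h₃⟩
  rw [← hupper, ← hlower, ← card_union_add_card_inter, hunion, hinter,
    card_filter_snd_eq_fst_add, Nat.sub_zero]

lemma add_mul_mem_stridedMask_iff {κ s : ℕ} (hs : s ≠ 0) {x₀ y₀ : ℤ}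
    (hanchor : (x₀, y₀) ∈ stridedMask (κ * s)) (i j : ℕ) :
    (x₀ + i * s, y₀ + j * s) ∈ stridedMask (κ * s) ↔ i ≡ j [MOD κ] := by
  simp only [stridedMask, Set.mem_ofPred_eq] at hanchor ⊢
  rw [show x₀ + i * s - (y₀ + j * s) = (x₀ - y₀) + (i - j : ℤ) * s by ring,
    dvd_add_right hanchor, Nat.cast_mul, mul_dvd_mul_iff_right (by exact_mod_cast hs),
    Nat.ModEq.comm, Nat.modEq_iff_dvd]

lemma ncard_comp_inter_stridedMask {κ s : ℕ} (hs : s ≠ 0) {x₀ y₀ : ℤ}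
    (hanchor : (x₀, y₀) ∈ stridedMask (κ * s)) (m n : ℕ) :
    (Comp x₀ y₀ s m n ∩ stridedMask (κ * s)).ncard =
      #{p ∈ range n ×ˢ range m | p.1 ≡ p.2 [MOD κ]} := by
  set f : ℕ × ℕ → ℤ × ℤ := fun p => (x₀ + p.1 * s, y₀ + p.2 * s)
  have hf : Function.Injective f := fun p q h => by
    simp only [f, Prod.mk.injEq, add_right_inj, mul_left_inj' (Int.natCast_ne_zero.2 hs),
      Nat.cast_inj] at h
    exact Prod.ext h.1 h.2
  rw [← Set.ncard_coe_finset, ← Set.ncard_image_of_injective _ hf]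
  congr 1
  ext p
  simp only [Comp, Set.mem_inter_iff, Set.mem_ofPred_eq, coe_filter, mem_product, mem_range,
    Set.mem_image, Prod.exists]
  constructor
  · rintro ⟨⟨i, j, hi, hj, rfl⟩, hmask⟩
    exact ⟨i, j, ⟨⟨hi, hj⟩, (add_mul_mem_stridedMask_iff hs hanchor i j).1 hmask⟩, rfl⟩
  · rintro ⟨i, j, ⟨⟨hi, hj⟩, hmod⟩, rfl⟩
    exact ⟨⟨i, j, hi, hj, rfl⟩, (add_mul_mem_stridedMask_iff hs hanchor i j).2 hmod⟩

lemma sum_range_eq_sum_Ico_zero {M : Type*} [AddCommMonoid M] (f : ℤ → M) (N : ℕ) :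
    ∑ k ∈ range N, f k = ∑ k ∈ Ico (0 : ℤ) N, f k := by
  rw [Int.Ico_eq_finset_map, sum_map]
  simp

lemma natCast_sum_range_min_sub (a b κ N : ℕ) :
    ((∑ k ∈ range N, min a (b - k * κ) : ℕ) : ℤ) =
      ∑ k ∈ Ico (0 : ℤ) N, min (a : ℤ) (max ((b : ℤ) - k * κ) 0) := by
  rw [Nat.cast_sum, ← sum_range_eq_sum_Ico_zero]
  refine sum_congr rfl fun k _ => ?_
  push_cast
  omega

lemma lt_ceil_div_iff_mul_lt {κ : ℕ} (hκ : 0 < κ) (k a : ℤ) :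
    k < ⌈(a : ℚ) / κ⌉ ↔ k * κ < a := by
  rw [Int.lt_ceil, lt_div_iff₀ (by exact_mod_cast hκ)]
  exact_mod_cast Iff.rfl

lemma ceil_sub_one_div_lt {κ a : ℕ} (hκ : 0 < κ) (ha : 0 < a) :
    ⌈((a : ℚ) - 1) / κ⌉ < a := by
  have hκ1 : (1 : ℚ) ≤ κ := by exact_mod_cast hκ
  have ha1 : (1 : ℚ) ≤ a := by exact_mod_cast ha
  rw [Int.ceil_lt_iff, div_le_iff₀ (by positivity)]
  push_cast
  nlinarith

lemma sum_Icc_ceil_max_sub_mul_eq_sum_Ico {κ a : ℕ} (hκ : 0 < κ) {l N : ℤ}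
    (hN : ⌈((a : ℚ) - 1) / κ⌉ < N) :
    ∑ k ∈ Icc l ⌈((a : ℚ) - 1) / κ⌉, max ((a : ℤ) - k * κ) 0 =
      ∑ k ∈ Ico l N, max ((a : ℤ) - k * κ) 0 := by
  refine sum_subset (fun k hk => ?_) fun k hk hk' => ?_
  · simp only [mem_Icc, mem_Ico] at hk ⊢
    omega
  · simp only [mem_Icc, mem_Ico, not_and, not_le] at hk hk'
    have := (lt_ceil_div_iff_mul_lt hκ (k - 1) (a - 1)).not.1 (by push_cast; omega)
    have : (1 : ℤ) ≤ κ := by exact_mod_cast hκ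
    rw [max_eq_right]
    linarith

lemma sum_Ico_min_max_sub_mul_eq_ceil_mul_add {κ n m : ℕ} (hκ : 0 < κ) (hn : 0 < n)
    (hnm : n ≤ m) :
    ∑ k ∈ Ico (0 : ℤ) m, min (n : ℤ) (max ((m : ℤ) - k * κ) 0) =
      ⌈((m : ℚ) - n + 1) / κ⌉ * n +
        ∑ k ∈ Ico ⌈((m : ℚ) - n + 1) / κ⌉ m, max ((m : ℤ) - k * κ) 0 := by
  set c := ⌈((m : ℚ) - n + 1) / κ⌉
  have hlt : ∀ k, k < c ↔ k * κ < m - n + 1 := fun k => by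
    have := lt_ceil_div_iff_mul_lt hκ k ((m : ℤ) - n + 1)
    push_cast at this
    exact this
  have hκ1 : (1 : ℤ) ≤ κ := by exact_mod_cast hκ
  have hc0 : 0 ≤ c := by have := (hlt 0).2; omega
  have hcm : c ≤ m := by
    by_contra! h
    have := (hlt m).1 h
    nlinarith
  rw [← Ico_union_Ico_eq_Ico hc0 hcm, sum_union (Ico_disjoint_Ico_consecutive _ _ _)]
  congr 1
  · rw [sum_congr rfl fun k hk => min_eq_left ?_, sum_const, Int.card_Ico, sub_zero, nsmul_eq_mul,
      Int.toNat_of_nonneg hc0]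
    simp only [mem_Ico] at hk
    have := (hlt k).1 hk.2
    omega
  · refine sum_congr rfl fun k hk => min_eq_right ?_
    simp only [mem_Ico] at hk
    have := (hlt k).not.1 (not_lt.2 hk.1)
    omega

lemma sum_Ico_min_max_sub_mul_eq_add_sum_Ico_one {κ n m : ℕ} (hn : 0 < n) (hnm : n ≤ m) :
    ∑ k ∈ Ico (0 : ℤ) n, min (m : ℤ) (max ((n : ℤ) - k * κ) 0) =
      n + ∑ k ∈ Ico (1 : ℤ) n, max ((n : ℤ) - k * κ) 0 := by
  rw [← Ico_union_Ico_eq_Ico zero_le_one (by exact_mod_cast hn),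
    sum_union (Ico_disjoint_Ico_consecutive _ _ _)]
  congr 1
  · rw [Int.Ico_eq_finset_map]
    simp [hnm]
  · refine sum_congr rfl fun k hk => min_eq_right ?_
    have : 0 ≤ k * κ := mul_nonneg (by linarith [(mem_Ico.1 hk).1]) (Nat.cast_nonneg κ)
    omega

theorem cover_card_strided_general
    (X s κ m n : ℕ) (hs : 0 < s) (hκ : 0 < κ)
    (hXκ : X = κ * s) (hn : 0 < n) (hmn : n ≤ m)
    (x₀ y₀ : ℤ) (hanchor : (x₀, y₀) ∈ stridedMask X) :
    ((Comp x₀ y₀ (s : ℤ) m n ∩ stridedMask X).ncard : ℤ) =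
      ⌈((m : ℚ) - n + 1) / κ⌉ * n
        + ∑ k ∈ Finset.Icc ⌈((m : ℚ) - n + 1) / κ⌉ ⌈((m : ℚ) - 1) / κ⌉,
            max ((m : ℤ) - k * κ) 0
        + ∑ k ∈ Finset.Icc (1 : ℤ) ⌈((n : ℚ) - 1) / κ⌉,
            max ((n : ℤ) - k * κ) 0 := by
  subst hXκ
  have hcount := card_filter_modEq_add_min hκ n m
  rw [min_eq_left hmn] at hcount
  replace hcount := congrArg (Nat.cast (R := ℤ)) hcount
  push_cast only [Nat.cast_add] at hcount
  rw [natCast_sum_range_min_sub, natCast_sum_range_min_sub,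
    sum_Ico_min_max_sub_mul_eq_ceil_mul_add hκ hn hmn,
    sum_Ico_min_max_sub_mul_eq_add_sum_Ico_one hn hmn] at hcount
  rw [ncard_comp_inter_stridedMask hs.ne' hanchor,
    sum_Icc_ceil_max_sub_mul_eq_sum_Ico hκ (ceil_sub_one_div_lt hκ (hn.trans_le hmn)),
    sum_Icc_ceil_max_sub_mul_eq_sum_Ico hκ (ceil_sub_one_div_lt hκ hn)]
  linarith

/-- Exact cover size of a thread-block anchored on a strided mask with
stride `X = κ·s`, for `m ≥ n`. -/
theorem cover_card_strided
    (X s κ m n : ℕ) (hX : 0 < X) (hs : 0 < s) (hκ : 0 < κ)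
    (hXκ : X = κ * s) (hm : 0 < m) (hn : 0 < n) (hmn : n ≤ m)
    (x₀ y₀ : ℤ) (hanchor : (x₀, y₀) ∈ stridedMask X) :
    ((Comp x₀ y₀ (s : ℤ) m n ∩ stridedMask X).ncard : ℤ) =
      ⌈((m : ℚ) - n + 1) / κ⌉ * n
        + ∑ k ∈ Finset.Icc ⌈((m : ℚ) - n + 1) / κ⌉ ⌈((m : ℚ) - 1) / κ⌉,
            max ((m : ℤ) - k * κ) 0
        + ∑ k ∈ Finset.Icc (1 : ℤ) ⌈((n : ℚ) - 1) / κ⌉,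
            max ((n : ℤ) - k * κ) 0 :=
  cover_card_strided_general X s κ m n hs hκ hXκ hn hmn x₀ y₀ hanchor
end

section
/- Let m, n, κ be positive integers with m ≥ n. Then the number of pairs (i, j) with 0 ≤ i < n, 0 ≤ j < m and κ dividing (j − i) equals ⌈(m−n+1)/κ⌉·n + Σ_{k=⌈(m−n+1)/κ⌉}^{⌈(m−1)/κ⌉} max(m − k·κ, 0) + Σ_{k=1}^{⌈(n−1)/κ⌉} max(n − k·κ, 0). -/
/-!
Sort the pairs by the diagonal `j - i = k * κ` they lie on. For `k ≥ 0` the diagonal holds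
`min n (m - k * κ)` pairs: all `n` of them exactly when `k * κ ≤ m - n`, i.e. for
`k < ⌈(m - n + 1) / κ⌉`, and none once `k * κ ≥ m`, i.e. for `k > ⌈(m - 1) / κ⌉`. Since `n ≤ m`,
the diagonal `j - i = -k * κ` holds `max (n - k * κ) 0` pairs, which vanishes for
`k > ⌈(n - 1) / κ⌉`.
-/

open Finset

theorem Int.ceil_intCast_div_le_iff {K : Type*} [Field K] [LinearOrder K] [IsStrictOrderedRing K]
    [FloorRing K] (a k : ℤ) {b : ℤ} (hb : 0 < b) :
    ⌈(a : K) / b⌉ ≤ k ↔ a ≤ k * b := by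
  rw [Int.ceil_le, div_le_iff₀ (by exact_mod_cast hb)]
  exact_mod_cast Iff.rfl

theorem Int.sum_Icc_eq_sum_Ico_add_sum_Icc {M : Type*} [AddCommMonoid M] (f : ℤ → M)
    {a b c : ℤ} (hab : a ≤ b) (hbc : b ≤ c + 1) :
    ∑ k ∈ Icc a c, f k = ∑ k ∈ Ico a b, f k + ∑ k ∈ Icc b c, f k := by
  rw [← sum_union (disjoint_left.2 fun k hk hk' => by
    simp only [mem_Ico, mem_Icc] at hk hk'; omega)]
  congr 1
  ext k
  simp only [mem_Ico, mem_Icc, mem_union]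
  omega

theorem Int.sum_Ico_neg_eq_sum_Icc {M : Type*} [AddCommMonoid M] (f : ℤ → M) (c : ℤ) :
    ∑ k ∈ Ico (-c) 0, f k = ∑ k ∈ Icc 1 c, f (-k) :=
  sum_nbij' (fun k => -k) (fun k => -k) (fun k hk => by simp at hk ⊢; omega)
    (fun k hk => by simp at hk ⊢; omega) (by simp) (by simp) (by simp)

theorem card_filter_dvd_eq_sum_card_filter_eq_mul {α : Type*} (s : Finset α) (g : α → ℤ)
    {b : ℤ} (hb : b ≠ 0) (t : Finset ℤ) (ht : ∀ a ∈ s, b ∣ g a → g a / b ∈ t) :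
    #{a ∈ s | b ∣ g a} = ∑ k ∈ t, #{a ∈ s | g a = k * b} := by
  rw [card_eq_sum_card_fiberwise (f := fun a => g a / b) fun a ha => by
    simp only [coe_filter, Set.mem_ofPred_eq] at ha; exact ht a ha.1 ha.2]
  refine sum_congr rfl fun k _ => ?_
  rw [filter_filter]
  congr 1
  refine filter_congr fun a _ => ⟨?_, fun h => ⟨⟨k, by rw [h, mul_comm]⟩, ?_⟩⟩
  · rintro ⟨h, rfl⟩
    exact (Int.ediv_mul_cancel h).symm
  · rw [h, Int.mul_ediv_cancel _ hb]

theorem card_range_product_filter_sub_eq (n m : ℕ) (d : ℤ) :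
    (#{p ∈ range n ×ˢ range m | (p.2 : ℤ) - p.1 = d} : ℤ) =
      max (min (n : ℤ) (m - d) - max 0 (-d)) 0 := by
  rw [← Int.toNat_eq_max, ← Int.card_Ico]
  congr 1
  refine card_nbij' (fun p => (p.1 : ℤ)) (fun i => (i.toNat, (i + d).toNat)) ?_ ?_ ?_ ?_ <;>
    intro x hx <;> simp only [coe_filter, mem_product, mem_range, Set.mem_ofPred_eq, coe_Ico,
      Set.mem_Ico, Prod.ext_iff] at hx ⊢ <;> omega

section Thresholds

variable {n m κ : ℕ} {A B C : ℤ}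

theorem sub_ediv_mem_Icc_of_dvd (hκ : 0 < κ) (hB : ∀ k, B ≤ k ↔ (m : ℤ) - 1 ≤ k * κ)
    (hC : ∀ k, C ≤ k ↔ (n : ℤ) - 1 ≤ k * κ) {i j : ℕ} (hi : i < n) (hj : j < m)
    (hdvd : (κ : ℤ) ∣ (j : ℤ) - i) :
    ((j : ℤ) - i) / κ ∈ Icc (-C) B := by
  obtain ⟨k, hk⟩ := hdvd
  have hκ' : (0 : ℤ) < κ := by exact_mod_cast hκ
  rw [hk, Int.mul_ediv_cancel_left _ hκ'.ne', mem_Icc]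
  constructor
  · exact not_lt.1 fun h => by linarith [(hC (-k - 1)).1 (by omega)]
  · exact not_lt.1 fun h => by linarith [(hB (k - 1)).1 (by omega)]

theorem card_range_product_filter_dvd_eq_sum_diagonals (hn : 0 < n) (hκ : 0 < κ)
    (hB : ∀ k, B ≤ k ↔ (m : ℤ) - 1 ≤ k * κ) (hC : ∀ k, C ≤ k ↔ (n : ℤ) - 1 ≤ k * κ)
    (hA0 : 0 ≤ A) (hAB : A ≤ B + 1) :
    (#{p ∈ range n ×ˢ range m | (κ : ℤ) ∣ (p.2 : ℤ) - p.1} : ℤ) =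
      ∑ k ∈ Icc 1 C, (#{p ∈ range n ×ˢ range m | (p.2 : ℤ) - p.1 = -k * κ} : ℤ)
        + (∑ k ∈ Ico 0 A, (#{p ∈ range n ×ˢ range m | (p.2 : ℤ) - p.1 = k * κ} : ℤ)
          + ∑ k ∈ Icc A B, (#{p ∈ range n ×ˢ range m | (p.2 : ℤ) - p.1 = k * κ} : ℤ)) := by
  have hκ' : (0 : ℤ) < κ := by exact_mod_cast hκ
  have hC0 : 0 ≤ C := not_lt.1 fun h => by nlinarith [(hC (-1)).1 (by omega)]
  rw [card_filter_dvd_eq_sum_card_filter_eq_mul _ _ hκ'.ne' (Icc (-C) B) fun p hp hdvd =>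
      sub_ediv_mem_Icc_of_dvd hκ hB hC (mem_range.1 (mem_product.1 hp).1)
        (mem_range.1 (mem_product.1 hp).2) hdvd,
    Int.sum_Icc_eq_sum_Ico_add_sum_Icc _ (b := 0) (by omega) (by omega),
    Int.sum_Icc_eq_sum_Ico_add_sum_Icc _ hA0 hAB, Int.sum_Ico_neg_eq_sum_Icc]
  push_cast
  rfl

theorem card_range_product_filter_dvd_sub_eq (hn : 0 < n) (hκ : 0 < κ) (hmn : n ≤ m)
    (hA : ∀ k, A ≤ k ↔ (m : ℤ) - n + 1 ≤ k * κ) (hB : ∀ k, B ≤ k ↔ (m : ℤ) - 1 ≤ k * κ)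
    (hC : ∀ k, C ≤ k ↔ (n : ℤ) - 1 ≤ k * κ) :
    (#{p ∈ range n ×ˢ range m | (κ : ℤ) ∣ (p.2 : ℤ) - p.1} : ℤ) =
      A * n + ∑ k ∈ Icc A B, max ((m : ℤ) - k * κ) 0
        + ∑ k ∈ Icc 1 C, max ((n : ℤ) - k * κ) 0 := by
  have hκ' : (0 : ℤ) < κ := by exact_mod_cast hκ
  have hA0 : 0 ≤ A := le_of_lt <| not_le.1 fun h => by linarith [(hA 0).1 h]
  have hAB : A ≤ B + 1 := (hA _).2 (by linarith [(hB B).1 le_rfl])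
  rw [card_range_product_filter_dvd_eq_sum_diagonals hn hκ hB hC hA0 hAB]
  simp only [card_range_product_filter_sub_eq]
  have hneg : ∀ k ∈ Icc 1 C, max (min (n : ℤ) (m - -k * κ) - max 0 (-(-k * κ))) 0 =
      max ((n : ℤ) - k * κ) 0 := by
    intro k hk
    have : 0 ≤ k * κ := mul_nonneg (by rw [mem_Icc] at hk; omega) hκ'.le
    rw [neg_mul, neg_neg]
    omega
  have hfull : ∀ k ∈ Ico 0 A, max (min (n : ℤ) (m - k * κ) - max 0 (-(k * κ))) 0 = n := by
    intro k hk
    rw [mem_Ico] at hk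
    have := mul_nonneg hk.1 hκ'.le
    have := (hA k).not.1 (not_le.2 hk.2)
    omega
  have htail : ∀ k ∈ Icc A B, max (min (n : ℤ) (m - k * κ) - max 0 (-(k * κ))) 0 =
      max ((m : ℤ) - k * κ) 0 := by
    intro k hk
    have := (hA k).1 (mem_Icc.1 hk).1
    omega
  rw [sum_congr rfl hneg, sum_congr rfl hfull, sum_congr rfl htail, sum_const, Int.card_Ico,
    sub_zero, nsmul_eq_mul, Int.toNat_of_nonneg hA0]
  ring

end Thresholds

theorem count_divisible_pairs_general
    (m n κ : ℕ) (hn : 0 < n) (hκ : 0 < κ) (hmn : n ≤ m) :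
    ((((Finset.range n) ×ˢ (Finset.range m)).filter
        (fun p => (κ : ℤ) ∣ ((p.2 : ℤ) - (p.1 : ℤ)))).card : ℤ) =
      ⌈((m : ℚ) - n + 1) / κ⌉ * n
        + ∑ k ∈ Finset.Icc ⌈((m : ℚ) - n + 1) / κ⌉ ⌈((m : ℚ) - 1) / κ⌉,
            max ((m : ℤ) - k * κ) 0
        + ∑ k ∈ Finset.Icc (1 : ℤ) ⌈((n : ℚ) - 1) / κ⌉,
            max ((n : ℤ) - k * κ) 0 := by
  have hceil (a k : ℤ) : ⌈(a : ℚ) / κ⌉ ≤ k ↔ a ≤ k * κ := by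
    exact_mod_cast Int.ceil_intCast_div_le_iff (K := ℚ) a k (by exact_mod_cast hκ : (0 : ℤ) < κ)
  refine card_range_product_filter_dvd_sub_eq hn hκ hmn (fun k => ?_) (fun k => ?_) (fun k => ?_)
  · simpa only [Int.cast_add, Int.cast_sub, Int.cast_natCast, Int.cast_one] using hceil (m - n + 1) k
  · simpa only [Int.cast_sub, Int.cast_natCast, Int.cast_one] using hceil (m - 1) k
  · simpa only [Int.cast_sub, Int.cast_natCast, Int.cast_one] using hceil (n - 1) k

/-- The number of pairs `(i, j)` with `0 ≤ i < n`, `0 ≤ j < m` and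
`κ ∣ (j − i)` (over ℤ) equals the closed-form expression. -/
theorem count_divisible_pairs
    (m n κ : ℕ) (hm : 0 < m) (hn : 0 < n) (hκ : 0 < κ) (hmn : n ≤ m) :
    ((((Finset.range n) ×ˢ (Finset.range m)).filter
        (fun p => (κ : ℤ) ∣ ((p.2 : ℤ) - (p.1 : ℤ)))).card : ℤ) =
      ⌈((m : ℚ) - n + 1) / κ⌉ * n
        + ∑ k ∈ Finset.Icc ⌈((m : ℚ) - n + 1) / κ⌉ ⌈((m : ℚ) - 1) / κ⌉,
            max ((m : ℤ) - k * κ) 0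
        + ∑ k ∈ Finset.Icc (1 : ℤ) ⌈((n : ℚ) - 1) / κ⌉,
            max ((n : ℤ) - k * κ) 0 :=
  count_divisible_pairs_general m n κ hn hκ hmn
end

section
/- Let X, m, n be positive integers and let P_X be the strided mask with stride X. Let TB₁ and TB₂ be thread-blocks of size m×n with anchors in P_X and stretch factors s₁ and s₂ respectively (positive integers). If gcd(s₁, X) ≤ gcd(s₂, X), then |Cov(TB₁)| ≤ |Cov(TB₂)|; that is, the cover of a thread-block anchored on a strided mask is monotonically non-decreasing in gcd(s, X). -/
theorem Int.natCast_dvd_mul_natCast_iff_div_gcd_dvd {X s : ℕ} (hs : s ≠ 0) (k : ℤ) :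
    (X : ℤ) ∣ k * s ↔ ((X / Nat.gcd s X : ℕ) : ℤ) ∣ k := by
  have hg0 : (Nat.gcd s X : ℤ) ≠ 0 := by simp [hs]
  rw [Int.natCast_div, Int.div_dvd_iff_dvd_mul (by exact_mod_cast Nat.gcd_dvd_right s X) hg0,
    ← dvd_mul_gcd_iff_dvd_mul, mul_comm, Nat.gcd_comm]
  rfl

theorem mul_mem_uIcc_zero_mul {α : Type*} [Ring α] [LinearOrder α] [IsStrictOrderedRing α]
    {a b : α} (ha : 0 ≤ a) (h : a ≤ b) (k : α) : k * a ∈ Set.uIcc 0 (k * b) := by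
  rcases le_total 0 k with hk | hk
  · exact Set.mem_uIcc_of_le (mul_nonneg hk ha) (mul_le_mul_of_nonneg_left h hk)
  · exact Set.mem_uIcc_of_ge (mul_le_mul_of_nonpos_left h hk)
      (mul_nonpos_of_nonpos_of_nonneg hk ha)

def boxDiagonals (d : ℤ) (m n : ℕ) : Set (ℤ × ℤ) :=
  Set.Ico (0 : ℤ) n ×ˢ Set.Ico (0 : ℤ) m ∩ {p | d ∣ p.1 - p.2}

theorem finite_boxDiagonals (d : ℤ) (m n : ℕ) : (boxDiagonals d m n).Finite :=
  ((Set.finite_Ico _ _).prod (Set.finite_Ico _ _)).subset Set.inter_subset_left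

/-- For `0 < d₂ ≤ d₁`, moves a point of the diagonal `i - j = k d₁` to the diagonal `i - j = k d₂`
by lowering one of its coordinates. -/
def shiftDiagonal (d₁ d₂ : ℤ) (p : ℤ × ℤ) : ℤ × ℤ :=
  (min p.1 (p.2 + (p.1 - p.2) / d₁ * d₂), min p.2 (p.1 - (p.1 - p.2) / d₁ * d₂))

section shiftDiagonal

variable {d₁ d₂ : ℤ} {m n : ℕ}

theorem shiftDiagonal_of_sub_eq {k : ℤ} {p : ℤ × ℤ} (hd₁ : d₁ ≠ 0) (hp : p.1 - p.2 = k * d₁) :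
    shiftDiagonal d₁ d₂ p = (min p.1 (p.2 + k * d₂), min p.2 (p.1 - k * d₂)) := by
  rw [shiftDiagonal, hp, Int.mul_ediv_cancel _ hd₁]

theorem shiftDiagonal_mem_boxDiagonals (hd₂ : 0 < d₂) (h : d₂ ≤ d₁) {p : ℤ × ℤ}
    (hp : p ∈ boxDiagonals d₁ m n) :
    shiftDiagonal d₁ d₂ p ∈ boxDiagonals d₂ m n := by
  obtain ⟨⟨⟨hp₁, hp₁'⟩, ⟨hp₂, hp₂'⟩⟩, k, hk⟩ := hp
  rw [mul_comm] at hk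
  rw [shiftDiagonal_of_sub_eq (by omega) hk]
  rcases Set.mem_uIcc.mp (mul_mem_uIcc_zero_mul hd₂.le h k) with hkd | hkd
  all_goals exact ⟨⟨⟨by omega, by omega⟩, ⟨by omega, by omega⟩⟩, Dvd.intro_left k (by omega)⟩

theorem injOn_shiftDiagonal (hd₂ : 0 < d₂) (h : d₂ ≤ d₁) :
    Set.InjOn (shiftDiagonal d₁ d₂) (boxDiagonals d₁ m n) := by
  rintro a ⟨-, ka, hka⟩ b ⟨-, kb, hkb⟩ hab
  rw [mul_comm] at hka hkb
  rw [shiftDiagonal_of_sub_eq (by omega) hka, shiftDiagonal_of_sub_eq (by omega) hkb,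
    Prod.mk.injEq] at hab
  have hk : ka * d₂ = kb * d₂ := by omega
  obtain rfl : ka = kb := mul_right_cancel₀ hd₂.ne' hk
  rcases Set.mem_uIcc.mp (mul_mem_uIcc_zero_mul hd₂.le h ka) with hkd | hkd
  all_goals exact Prod.ext (by omega) (by omega)

theorem ncard_boxDiagonals_le (hd₂ : 0 < d₂) (h : d₂ ≤ d₁) :
    (boxDiagonals d₁ m n).ncard ≤ (boxDiagonals d₂ m n).ncard :=
  Set.ncard_le_ncard_of_injOn _ (fun _ => shiftDiagonal_mem_boxDiagonals hd₂ h)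
    (injOn_shiftDiagonal hd₂ h) (finite_boxDiagonals _ _ _)

end shiftDiagonal

theorem comp_eq_image (x₀ y₀ s : ℤ) (m n : ℕ) :
    Comp x₀ y₀ s m n =
      (fun p : ℤ × ℤ => (x₀ + p.1 * s, y₀ + p.2 * s)) ''
        Set.Ico (0 : ℤ) n ×ˢ Set.Ico (0 : ℤ) m := by
  ext q
  constructor
  · rintro ⟨i, j, hi, hj, rfl⟩
    exact ⟨(i, j), ⟨⟨by omega, by omega⟩, ⟨by omega, by omega⟩⟩, rfl⟩
  · rintro ⟨⟨i, j⟩, ⟨⟨hi, hi'⟩, ⟨hj, hj'⟩⟩, rfl⟩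
    lift i to ℕ using hi
    lift j to ℕ using hj
    exact ⟨i, j, by omega, by omega, rfl⟩

theorem cover_eq_image {X s : ℕ} (hs : s ≠ 0) {x₀ y₀ : ℤ} (hanch : (x₀, y₀) ∈ stridedMask X)
    (m n : ℕ) :
    Comp x₀ y₀ s m n ∩ stridedMask X =
      (fun p : ℤ × ℤ => (x₀ + p.1 * s, y₀ + p.2 * s)) ''
        boxDiagonals (X / Nat.gcd s X : ℕ) m n := by
  rw [comp_eq_image, ← Set.image_inter_preimage, boxDiagonals]
  congr 2
  ext p
  simp only [Set.mem_preimage, stridedMask, Set.mem_ofPred_eq,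
    ← Int.natCast_dvd_mul_natCast_iff_div_gcd_dvd hs]
  rw [show x₀ + p.1 * s - (y₀ + p.2 * s) = (x₀ - y₀) + (p.1 - p.2) * s by ring,
    dvd_add_right hanch]

theorem ncard_cover {X s : ℕ} (hs : s ≠ 0) {x₀ y₀ : ℤ} (hanch : (x₀, y₀) ∈ stridedMask X)
    (m n : ℕ) :
    (Comp x₀ y₀ s m n ∩ stridedMask X).ncard = (boxDiagonals (X / Nat.gcd s X : ℕ) m n).ncard := by
  rw [cover_eq_image hs hanch]
  refine Set.ncard_image_of_injective _ fun p q hpq => ?_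
  simp only [Prod.mk.injEq, add_right_inj] at hpq
  have hs' : (s : ℤ) ≠ 0 := by exact_mod_cast hs
  exact Prod.ext (mul_right_cancel₀ hs' hpq.1) (mul_right_cancel₀ hs' hpq.2)

theorem cover_mono_gcd_general
    (X m n : ℕ) (hX : 0 < X)
    (s₁ s₂ : ℕ) (hs₁ : 0 < s₁) (hs₂ : 0 < s₂)
    (x₁ y₁ x₂ y₂ : ℤ)
    (hanch₁ : (x₁, y₁) ∈ stridedMask X) (hanch₂ : (x₂, y₂) ∈ stridedMask X)
    (hgcd : Nat.gcd s₁ X ≤ Nat.gcd s₂ X) :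
    (Comp x₁ y₁ (s₁ : ℤ) m n ∩ stridedMask X).ncard ≤
      (Comp x₂ y₂ (s₂ : ℤ) m n ∩ stridedMask X).ncard := by
  rw [ncard_cover hs₁.ne' hanch₁, ncard_cover hs₂.ne' hanch₂]
  refine ncard_boxDiagonals_le ?_ ?_
  · exact Int.natCast_pos.mpr
      (Nat.div_pos (Nat.gcd_le_right _ hX) (Nat.gcd_pos_of_pos_left _ hs₂))
  · exact_mod_cast Nat.div_le_div_left hgcd (Nat.gcd_pos_of_pos_left X hs₁)

/-- The cover of a thread-block anchored on a strided mask is monotonically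
non-decreasing in `gcd(s, X)`. -/
theorem cover_mono_gcd
    (X m n : ℕ) (hX : 0 < X) (hm : 0 < m) (hn : 0 < n)
    (s₁ s₂ : ℕ) (hs₁ : 0 < s₁) (hs₂ : 0 < s₂)
    (x₁ y₁ x₂ y₂ : ℤ)
    (hanch₁ : (x₁, y₁) ∈ stridedMask X) (hanch₂ : (x₂, y₂) ∈ stridedMask X)
    (hgcd : Nat.gcd s₁ X ≤ Nat.gcd s₂ X) :
    (Comp x₁ y₁ (s₁ : ℤ) m n ∩ stridedMask X).ncard ≤
      (Comp x₂ y₂ (s₂ : ℤ) m n ∩ stridedMask X).ncard :=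
  cover_mono_gcd_general X m n hX s₁ s₂ hs₁ hs₂ x₁ y₁ x₂ y₂ hanch₁ hanch₂ hgcd
end

section
/- Let r, l, h, m, n be positive integers and l' a natural number. Let κ = gcd(m, h), τ_m = m/κ, τ_h = h/κ, and write τ_m = α·τ_h + β with 0 ≤ β < τ_h. Assume τ_m divides r, and let K = r·τ_h/τ_m (so the K patches of height m exactly cover the r·h rows of the structured dense polygon with parameters (r, l, h, l')). Define λ_naive = Σ_{i=0}^{K−1} ⌈w_i/n⌉. Then λ_naive = (r/τ_m)·(τ_h·⌈(l + (α−1)·l')/n⌉) if β = 0, and λ_naive = (r/τ_m)·((β−1)·⌈(l + (α+1)·l')/n⌉ + (τ_h − β + 1)·⌈(l + α·l')/n⌉) if β ≠ 0. -/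
/-- The number of height-`h` slabs that patch `i` (rows `i·m, …, (i+1)·m − 1`)
overlaps: `t_i = ⌊((i+1)·m − 1)/h⌋ − ⌊i·m/h⌋ + 1`. -/
def tslab (m h : ℕ) (i : ℕ) : ℤ :=
  ⌊((((i : ℤ) + 1) * m - 1 : ℤ) : ℚ) / (h : ℚ)⌋ - ⌊(((i : ℤ) * m : ℤ) : ℚ) / (h : ℚ)⌋ + 1

/-- The width of patch `i`: `w_i = l + (t_i − 1)·l'`. -/
def wpatch (m h l l' : ℕ) (i : ℕ) : ℤ :=
  (l : ℤ) + (tslab m h i - 1) * l'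

/-!
Since `m / h = α + β / τ_h`, the slab count of patch `i` is
`t_i = ⌈(i + 1) m / h⌉ - ⌊i m / h⌋ = α + ⌈(i + 1) y⌉ - ⌊i y⌋` with `y = β / τ_h`.
For `β = 0` this is `α` for every `i`. Otherwise `0 < y < 1`, so every `t_i` is `α + 1` or
`α + 2` and the sum is determined by `∑ t_i`. Splitting `⌈(i + 1) y⌉ - ⌊i y⌋` as
`(⌈(i + 1) y⌉ - ⌊(i + 1) y⌋) + (⌊(i + 1) y⌋ - ⌊i y⌋)`, the second part telescopes to
`⌊K y⌋ = (r / τ_m) β`, and the first counts the `i < K` with `(i + 1) β / τ_h ∉ ℤ`; as `β` and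
`τ_h` are coprime these are the `i` with `τ_h ∤ i + 1`, of which there are `K - r / τ_m`.
-/

open Finset

section FloorRing

variable {k : Type*} [Field k] [LinearOrder k] [IsStrictOrderedRing k] [FloorRing k]

theorem Int.floor_intCast_sub_one_div_natCast (a : ℤ) {b : ℕ} (hb : 0 < b) :
    ⌊((a - 1 : ℤ) : k) / b⌋ = ⌈(a : k) / b⌉ - 1 := by
  have hb' : (0 : k) < b := by exact_mod_cast hb
  have hlo := Int.ceil_lt_add_one ((a : k) / b)
  have hhi := Int.le_ceil ((a : k) / b)
  generalize ⌈(a : k) / b⌉ = c at hlo hhi ⊢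
  rw [← sub_lt_iff_lt_add, lt_div_iff₀ hb'] at hlo
  rw [div_le_iff₀ hb'] at hhi
  have hlo' : (c - 1) * (b : ℤ) < a := by exact_mod_cast hlo
  have hhi' : a ≤ c * (b : ℤ) := by exact_mod_cast hhi
  rw [Int.floor_eq_iff, le_div_iff₀ hb', div_lt_iff₀ hb']
  constructor
  · exact_mod_cast (show (c - 1) * (b : ℤ) ≤ a - 1 by omega)
  · exact_mod_cast (show a - 1 < (c - 1 + 1) * (b : ℤ) by linarith)

theorem Int.ceil_sub_floor_eq_ite (a : k) : ⌈a⌉ - ⌊a⌋ = if Int.fract a = 0 then 0 else 1 := by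
  split_ifs with ha
  · obtain ⟨z, rfl⟩ := Int.fract_eq_zero_iff.mp ha
    simp
  · rw [(Int.ceil_eq_floor_add_one_iff_notMem a).mpr (mt Int.fract_eq_zero_iff.mpr ha)]
    ring

theorem Int.ceil_add_sub_floor_eq_one_or_two {y : k} (hy₀ : 0 < y) (hy₁ : y ≤ 1) (z : k) :
    ⌈z + y⌉ - ⌊z⌋ = 1 ∨ ⌈z + y⌉ - ⌊z⌋ = 2 := by
  have hlo : ⌊z⌋ < ⌈z + y⌉ := Int.lt_ceil.mpr (by linarith [Int.floor_le z])
  have hhi : ⌈z + y⌉ ≤ ⌈z⌉ + 1 :=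
    (Int.ceil_add_le z y).trans (by gcongr; exact Int.ceil_le.mpr (by simpa using hy₁))
  have := Int.ceil_le_floor_add_one z
  omega

theorem Int.fract_natCast_div_eq_zero_iff {a q : ℕ} (hq : 0 < q) :
    Int.fract ((a : k) / q) = 0 ↔ q ∣ a := by
  rw [Int.fract_div_natCast_eq_div_natCast_mod, div_eq_zero_iff, Nat.cast_eq_zero,
    Nat.cast_eq_zero, Nat.dvd_iff_mod_eq_zero]
  omega

/-- For `x > 0`, the number of unit cells `[j, j + 1)` met by `[i x, (i + 1) x)`. -/
def cellCount (x : k) (i : ℕ) : ℤ := ⌈((i : k) + 1) * x⌉ - ⌊(i : k) * x⌋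

theorem cellCount_zero (i : ℕ) : cellCount (0 : k) i = 0 := by
  simp [cellCount]

theorem cellCount_add_intCast (x : k) (a : ℤ) (i : ℕ) :
    cellCount (x + a) i = cellCount x i + a := by
  have h₁ : ((i : k) + 1) * (x + a) = ((i : k) + 1) * x + (((i + 1) * a : ℤ) : k) := by
    push_cast; ring
  have h₂ : (i : k) * (x + a) = (i : k) * x + ((i * a : ℤ) : k) := by
    push_cast; ring
  rw [cellCount, cellCount, h₁, h₂, Int.ceil_add_intCast, Int.floor_add_intCast]
  ring

theorem cellCount_eq_one_or_two {y : k} (hy₀ : 0 < y) (hy₁ : y ≤ 1) (i : ℕ) :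
    cellCount y i = 1 ∨ cellCount y i = 2 := by
  unfold cellCount
  rw [add_one_mul]
  exact Int.ceil_add_sub_floor_eq_one_or_two hy₀ hy₁ _

theorem sum_range_cellCount (x : k) (K : ℕ) :
    ∑ i ∈ range K, cellCount x i =
      ⌊(K : k) * x⌋ + #{i ∈ range K | Int.fract ((((i : ℕ) : k) + 1) * x) ≠ 0} := by
  have hsplit : ∀ i, cellCount x i =
      (⌈((i : k) + 1) * x⌉ - ⌊((i : k) + 1) * x⌋) + (⌊((i + 1 : ℕ) : k) * x⌋ - ⌊(i : k) * x⌋) := by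
    intro i
    push_cast
    unfold cellCount
    ring
  simp only [hsplit, sum_add_distrib, Int.ceil_sub_floor_eq_ite]
  rw [sum_range_sub (fun i => ⌊(i : k) * x⌋)]
  simp [sum_ite, add_comm]

theorem sum_range_mul_cellCount_div {p q : ℕ} (hq : 0 < q) (hpq : p.Coprime q) (N : ℕ) :
    ∑ i ∈ range (N * q), cellCount ((p : k) / q) i = N * p + (N * q - N) := by
  have hq' : (q : k) ≠ 0 := by exact_mod_cast hq.ne'
  have hfloor : ⌊((N * q : ℕ) : k) * (p / q)⌋ = N * p := by
    rw [show ((N * q : ℕ) : k) * (p / q) = ((N * p : ℕ) : k) by push_cast; field_simp,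
      Int.floor_natCast]
    push_cast; rfl
  have hfilter : {i ∈ range (N * q) | Int.fract ((((i : ℕ) : k) + 1) * (p / q)) ≠ 0} =
      {i ∈ range (N * q) | ¬ q ∣ i + 1} := by
    refine filter_congr fun i _ => ?_
    rw [show ((i : k) + 1) * (p / q) = (((i + 1) * p : ℕ) : k) / q by push_cast; ring,
      Ne, Int.fract_natCast_div_eq_zero_iff hq, hpq.symm.dvd_mul_right]
  have hcount := card_filter_add_card_filter_not (s := range (N * q)) (fun i => q ∣ i + 1)
  rw [card_range, Nat.card_multiples, Nat.mul_div_cancel _ hq] at hcount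
  rw [sum_range_cellCount, hfloor, hfilter]
  have := congrArg (Nat.cast : ℕ → ℤ) hcount
  push_cast at this
  linarith

end FloorRing

theorem Finset.sum_comp_of_forall_eq_or_eq_add_one {ι R : Type*} [CommRing R] (s : Finset ι)
    (g : ι → ℤ) (φ : ℤ → R) (a : ℤ) (hg : ∀ i ∈ s, g i = a ∨ g i = a + 1) :
    ∑ i ∈ s, φ (g i) = #s * φ a + ((∑ i ∈ s, (g i - a) : ℤ) : R) * (φ (a + 1) - φ a) := by
  have hpt : ∀ i ∈ s, φ (g i) = φ a + ((g i - a : ℤ) : R) * (φ (a + 1) - φ a) := by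
    intro i hi
    rcases hg i hi with h | h <;> simp [h]
  rw [sum_congr rfl hpt, sum_add_distrib, sum_const, nsmul_eq_mul, Int.cast_sum, sum_mul]

theorem tslab_eq_cellCount {m h : ℕ} (hh : 0 < h) (i : ℕ) :
    tslab m h i = cellCount ((m : ℚ) / h) i := by
  rw [tslab, Int.floor_intCast_sub_one_div_natCast _ hh, cellCount]
  push_cast
  ring_nf

theorem tslab_eq_cellCount_add {m h α β : ℕ} (hh : 0 < h)
    (hαβ : m / Nat.gcd m h = α * (h / Nat.gcd m h) + β) (i : ℕ) :
    tslab m h i = cellCount ((β : ℚ) / (h / Nat.gcd m h : ℕ)) i + α := by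
  have hτh : 0 < h / Nat.gcd m h := Nat.div_gcd_pos_of_pos_right m hh
  have hm : (m : ℚ) = (α * (h / Nat.gcd m h : ℕ) + β) * Nat.gcd m h := by
    have := Nat.div_mul_cancel (Nat.gcd_dvd_left m h)
    rw [hαβ] at this
    exact_mod_cast this.symm
  have hh' : (h : ℚ) = (h / Nat.gcd m h : ℕ) * Nat.gcd m h := by
    exact_mod_cast (Nat.div_mul_cancel (Nat.gcd_dvd_right m h)).symm
  have hslope : (m : ℚ) / h = (β : ℚ) / (h / Nat.gcd m h : ℕ) + (α : ℤ) := by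
    rw [hm, hh']
    field_simp
    push_cast
    ring
  rw [tslab_eq_cellCount hh, hslope, cellCount_add_intCast]

theorem naive_tiling_count_general
    (r l h m n : ℕ) (l' : ℕ)
    (hh : 0 < h)
    (α β : ℕ)
    (hαβ : m / Nat.gcd m h = α * (h / Nat.gcd m h) + β)
    (hβlt : β < h / Nat.gcd m h)
    (hdvd : (m / Nat.gcd m h) ∣ r)
    (K : ℕ) (hK : K = r * (h / Nat.gcd m h) / (m / Nat.gcd m h)) :
    (β = 0 →
      ∑ i ∈ Finset.range K, ⌈((wpatch m h l l' i : ℚ)) / (n : ℚ)⌉ =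
        ((r / (m / Nat.gcd m h) : ℕ) : ℤ) *
          (((h / Nat.gcd m h : ℕ) : ℤ) * ⌈((l : ℚ) + ((α : ℚ) - 1) * (l' : ℚ)) / (n : ℚ)⌉))
    ∧ (β ≠ 0 →
      ∑ i ∈ Finset.range K, ⌈((wpatch m h l l' i : ℚ)) / (n : ℚ)⌉ =
        ((r / (m / Nat.gcd m h) : ℕ) : ℤ) *
          (((β : ℤ) - 1) * ⌈((l : ℚ) + ((α : ℚ) + 1) * (l' : ℚ)) / (n : ℚ)⌉
            + (((h / Nat.gcd m h : ℕ) : ℤ) - (β : ℤ) + 1) *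
                ⌈((l : ℚ) + (α : ℚ) * (l' : ℚ)) / (n : ℚ)⌉)) := by
  set τh := h / Nat.gcd m h
  set N := r / (m / Nat.gcd m h)
  have hτh : 0 < τh := Nat.div_gcd_pos_of_pos_right m hh
  have ht : ∀ i, tslab m h i = cellCount ((β : ℚ) / τh) i + α := tslab_eq_cellCount_add hh hαβ
  have hKN : K = N * τh := by rw [hK, Nat.mul_div_right_comm hdvd]
  set φ : ℤ → ℤ := fun t => ⌈((l : ℚ) + ((t : ℚ) - 1) * l') / n⌉
  have hφ : ∀ i, ⌈(wpatch m h l l' i : ℚ) / n⌉ = φ (tslab m h i) := fun i => by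
    simp [wpatch, φ]
  simp only [hφ, hKN]
  refine ⟨fun hβ => ?_, fun hβ => ?_⟩
  · simp [ht, hβ, cellCount_zero, φ]
    ring
  have hcop : β.Coprime τh := (Nat.coprime_add_mul_right_left β τh α).mp <| by
    rw [add_comm, ← hαβ]; exact Nat.coprime_div_gcd_div_gcd (Nat.gcd_pos_of_pos_right m hh)
  have hy₀ : (0 : ℚ) < β / τh := by positivity
  have hy₁ : (β : ℚ) / τh ≤ 1 := (div_le_one (by positivity)).mpr (by exact_mod_cast hβlt.le)
  have hmem : ∀ i ∈ range (N * τh), tslab m h i = α + 1 ∨ tslab m h i = α + 1 + 1 :=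
    fun i _ => by rcases cellCount_eq_one_or_two hy₀ hy₁ i with hc | hc <;> rw [ht, hc] <;> omega
  have hsum : ∑ i ∈ range (N * τh), (tslab m h i - (α + 1)) = N * (β - 1) := by
    simp only [ht, sum_sub_distrib, sum_add_distrib, sum_const, card_range, nsmul_eq_mul,
      sum_range_mul_cellCount_div hτh hcop]
    push_cast
    ring
  rw [sum_comp_of_forall_eq_or_eq_add_one _ _ φ _ hmem, hsum]
  simp [φ]
  ring

/-- The number of thread-blocks used by the naive patch-by-patch tiling of the
structured dense polygon with parameters `(r, l, h, l')`, in closed form. -/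
theorem naive_tiling_count
    (r l h m n : ℕ) (l' : ℕ)
    (hr : 0 < r) (hl : 0 < l) (hh : 0 < h) (hm : 0 < m) (hn : 0 < n)
    (α β : ℕ)
    (hαβ : m / Nat.gcd m h = α * (h / Nat.gcd m h) + β)
    (hβlt : β < h / Nat.gcd m h)
    (hdvd : (m / Nat.gcd m h) ∣ r)
    (K : ℕ) (hK : K = r * (h / Nat.gcd m h) / (m / Nat.gcd m h)) :
    (β = 0 →
      ∑ i ∈ Finset.range K, ⌈((wpatch m h l l' i : ℚ)) / (n : ℚ)⌉ =
        ((r / (m / Nat.gcd m h) : ℕ) : ℤ) *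
          (((h / Nat.gcd m h : ℕ) : ℤ) * ⌈((l : ℚ) + ((α : ℚ) - 1) * (l' : ℚ)) / (n : ℚ)⌉))
    ∧ (β ≠ 0 →
      ∑ i ∈ Finset.range K, ⌈((wpatch m h l l' i : ℚ)) / (n : ℚ)⌉ =
        ((r / (m / Nat.gcd m h) : ℕ) : ℤ) *
          (((β : ℤ) - 1) * ⌈((l : ℚ) + ((α : ℚ) + 1) * (l' : ℚ)) / (n : ℚ)⌉
            + (((h / Nat.gcd m h : ℕ) : ℤ) - (β : ℤ) + 1) *
                ⌈((l : ℚ) + (α : ℚ) * (l' : ℚ)) / (n : ℚ)⌉)) :=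
  naive_tiling_count_general r l h m n l' hh α β hαβ hβlt hdvd K hK
end

section
/- Let m, h be positive integers, κ = gcd(m, h), τ_m = m/κ, τ_h = h/κ, and write τ_m = α·τ_h + β with 0 ≤ β < τ_h. Assume β ≠ 0. Then for every i with 0 ≤ i < τ_h, the slab-overlap count t_i = ⌊((i+1)·m − 1)/h⌋ − ⌊i·m/h⌋ + 1 lies in {α+1, α+2}; moreover exactly β − 1 of the indices i ∈ {0, …, τ_h − 1} satisfy t_i = α+2, and exactly τ_h − β + 1 of them satisfy t_i = α+1. -/
open Finset

namespace Int

theorem sub_one_ediv_of_not_dvd {n b : ℤ} (hb : 0 < b) (hn : ¬b ∣ n) : (n - 1) / b = n / b := by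
  have : n % b ≠ 0 := fun h => hn (Int.dvd_of_emod_eq_zero h)
  have := Int.emod_add_mul_ediv n b
  have := Int.emod_nonneg n hb.ne'
  have := Int.emod_lt_of_pos n hb
  exact ((Int.ediv_emod_unique (r := n % b - 1) hb).2 ⟨by linarith, by omega, by omega⟩).1

theorem mul_sub_one_ediv {b : ℤ} (hb : 0 < b) (q : ℤ) : (b * q - 1) / b = q - 1 :=
  ((Int.ediv_emod_unique (r := b - 1) hb).2 ⟨by ring, by omega, by omega⟩).1

theorem add_sub_one_ediv_sub_ediv {m b : ℤ} (hb : 0 < b) (hm : ¬b ∣ m) (n : ℤ) :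
    (n + m - 1) / b - n / b = m / b ∨ (n + m - 1) / b - n / b = m / b + 1 := by
  have : 0 < m % b :=
    (Int.emod_nonneg m hb.ne').lt_of_ne' fun h => hm (Int.dvd_of_emod_eq_zero h)
  have := Int.emod_add_mul_ediv m b
  have := Int.emod_add_mul_ediv n b
  have := Int.emod_add_mul_ediv (n + m - 1) b
  have := Int.emod_nonneg n hb.ne'
  have := Int.emod_nonneg (n + m - 1) hb.ne'
  have := Int.emod_lt_of_pos m hb
  have := Int.emod_lt_of_pos n hb
  have := Int.emod_lt_of_pos (n + m - 1) hb
  set d := (n + m - 1) / b - n / b - m / b with hd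
  have hlo : -b < b * d := by rw [hd, mul_sub, mul_sub]; linarith
  have hhi : b * d < 2 * b := by rw [hd, mul_sub, mul_sub]; linarith
  have : 0 ≤ d := by nlinarith
  have : d ≤ 1 := by nlinarith
  omega

end Int

theorem tslab_eq_ediv (m h i : ℕ) :
    tslab m h i = ((i * m + m : ℤ) - 1) / h - (i * m : ℤ) / h + 1 := by
  simp only [tslab, Rat.floor_intCast_div_natCast]
  ring_nf

theorem tslab_eq_or_eq {m h : ℕ} (hh : 0 < h) (hm : ¬h ∣ m) (i : ℕ) :
    tslab m h i = (m / h : ℕ) + 1 ∨ tslab m h i = (m / h : ℕ) + 1 + 1 := by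
  have hm' : ¬(h : ℤ) ∣ m := by exact_mod_cast hm
  rw [tslab_eq_ediv, Int.natCast_ediv]
  rcases Int.add_sub_one_ediv_sub_ediv (by exact_mod_cast hh) hm' (i * m : ℤ) with h | h
  · left; omega
  · right; omega

theorem sum_range_tslab {m h n : ℕ} (hh : 0 < h) (hn : 0 < n)
    (hdvd : ∀ j, 0 < j → j < n → ¬h ∣ j * m) :
    ∑ i ∈ range n, tslab m h i = ((n * m : ℤ) - 1) / h + n := by
  induction n, hn using Nat.le_induction with
  | base => simp [tslab_eq_ediv]
  | succ n hn ih =>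
    have hn' : ¬(h : ℤ) ∣ n * m := by exact_mod_cast hdvd n hn (by omega)
    rw [sum_range_succ, ih fun j hj hjn => hdvd j hj (by omega), tslab_eq_ediv,
      Int.sub_one_ediv_of_not_dvd (by exact_mod_cast hh) hn']
    push_cast
    ring_nf

section TwoValues

variable {ι : Type*} (s : Finset ι) (f : ι → ℤ) {a : ℤ}

theorem card_filter_eq_add_one_eq_sum_sub (hf : ∀ i ∈ s, f i = a ∨ f i = a + 1) :
    (#{i ∈ s | f i = a + 1} : ℤ) = ∑ i ∈ s, f i - #s * a := by
  have : ∑ i ∈ s, f i = ∑ i ∈ s, (a + if f i = a + 1 then 1 else 0) :=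
    sum_congr rfl fun i hi => by rcases hf i hi with h | h <;> simp [h]
  rw [this, sum_add_distrib, sum_const, sum_boole, nsmul_eq_mul]
  ring

theorem card_filter_eq_add_card_filter_eq_add_one (hf : ∀ i ∈ s, f i = a ∨ f i = a + 1) :
    #{i ∈ s | f i = a} + #{i ∈ s | f i = a + 1} = #s := by
  rw [← card_filter_add_card_filter_not (s := s) (fun i => f i = a + 1), add_comm]
  congr 2
  refine filter_congr fun i hi => ?_
  rcases hf i hi with h | h <;> simp [h]

end TwoValues

theorem not_dvd_mul_of_lt_div_gcd {m h j : ℕ} (hh : 0 < h) (hj : 0 < j)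
    (hjh : j < h / Nat.gcd m h) : ¬h ∣ j * m := by
  intro hdvd
  have hκ : 0 < Nat.gcd m h := Nat.gcd_pos_of_pos_right m hh
  have : h / Nat.gcd m h ∣ j * (m / Nat.gcd m h) := by
    rw [← Nat.mul_div_assoc j (Nat.gcd_dvd_left m h)]
    exact Nat.div_dvd_div (Nat.gcd_dvd_right m h) hdvd
  have := Nat.le_of_dvd hj
    (((Nat.coprime_div_gcd_div_gcd hκ).symm.dvd_of_dvd_mul_right) this)
  omega

theorem div_eq_of_div_gcd_eq_mul_add {m h α β : ℕ} (hh : 0 < h)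
    (hαβ : m / Nat.gcd m h = α * (h / Nat.gcd m h) + β) (hβlt : β < h / Nat.gcd m h) :
    m / h = α :=
  calc m / h = Nat.gcd m h * (m / Nat.gcd m h) / (Nat.gcd m h * (h / Nat.gcd m h)) := by
        rw [Nat.mul_div_cancel' (Nat.gcd_dvd_left m h), Nat.mul_div_cancel' (Nat.gcd_dvd_right m h)]
    _ = (α * (h / Nat.gcd m h) + β) / (h / Nat.gcd m h) := by
        rw [Nat.mul_div_mul_left _ _ (Nat.gcd_pos_of_pos_right m hh), hαβ]
    _ = α := by
        rw [add_comm, Nat.add_mul_div_right _ _ (by omega), Nat.div_eq_of_lt hβlt, zero_add]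

theorem slab_overlap_counts_general
    (m h : ℕ) (hh : 0 < h)
    (α β : ℕ)
    (hαβ : m / Nat.gcd m h = α * (h / Nat.gcd m h) + β)
    (hβlt : β < h / Nat.gcd m h)
    (hβ : β ≠ 0) :
    (∀ i < h / Nat.gcd m h, tslab m h i = (α : ℤ) + 1 ∨ tslab m h i = (α : ℤ) + 2)
    ∧ ((((Finset.range (h / Nat.gcd m h)).filter
          (fun i => tslab m h i = (α : ℤ) + 2)).card : ℤ) = (β : ℤ) - 1)
    ∧ ((((Finset.range (h / Nat.gcd m h)).filter
          (fun i => tslab m h i = (α : ℤ) + 1)).card : ℤ) =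
        ((h / Nat.gcd m h : ℕ) : ℤ) - (β : ℤ) + 1) := by
  set κ := Nat.gcd m h
  set τ := h / κ
  have hh' : h = κ * τ := (Nat.mul_div_cancel' (Nat.gcd_dvd_right m h)).symm
  have hm' : m = κ * (α * τ + β) := by rw [← hαβ, Nat.mul_div_cancel' (Nat.gcd_dvd_left m h)]
  have hm_ndvd : ¬h ∣ m := by
    simpa using not_dvd_mul_of_lt_div_gcd (m := m) hh one_pos (show 1 < τ by omega)
  have hvals : ∀ i ∈ range τ, tslab m h i = (α + 1 : ℤ) ∨ tslab m h i = (α + 1 : ℤ) + 1 :=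
    fun i _ => div_eq_of_div_gcd_eq_mul_add hh hαβ hβlt ▸ tslab_eq_or_eq hh hm_ndvd i
  have hsum : ∑ i ∈ range τ, tslab m h i = α * τ + β - 1 + τ := by
    rw [sum_range_tslab hh (show 0 < τ by omega) fun j hj hjτ =>
      not_dvd_mul_of_lt_div_gcd hh hj hjτ]
    have : (τ * m : ℤ) = h * (α * τ + β) := by rw [hm', hh']; push_cast; ring
    rw [this, Int.mul_sub_one_ediv (by exact_mod_cast hh)]
  have hupper := card_filter_eq_add_one_eq_sum_sub _ _ hvals
  have hboth := card_filter_eq_add_card_filter_eq_add_one _ _ hvals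
  rw [hsum, card_range, add_assoc, one_add_one_eq_two] at hupper
  rw [card_range, add_assoc, one_add_one_eq_two] at hboth
  have hcard : (#{i ∈ range τ | tslab m h i = α + 2} : ℤ) = β - 1 := by rw [hupper]; ring
  refine ⟨fun i hi => ?_, hcard, by omega⟩
  simpa [add_assoc, one_add_one_eq_two] using hvals i (mem_range.2 hi)

/-- When `τ_m = α·τ_h + β` with `0 < β < τ_h` (where `τ_m = m/gcd(m,h)`,
`τ_h = h/gcd(m,h)`), every slab-overlap count `t_i` for `i < τ_h` is `α+1` or
`α+2`; exactly `β − 1` of them equal `α+2` and exactly `τ_h − β + 1` equal `α+1`. -/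
theorem slab_overlap_counts
    (m h : ℕ) (hm : 0 < m) (hh : 0 < h)
    (α β : ℕ)
    (hαβ : m / Nat.gcd m h = α * (h / Nat.gcd m h) + β)
    (hβlt : β < h / Nat.gcd m h)
    (hβ : β ≠ 0) :
    (∀ i < h / Nat.gcd m h, tslab m h i = (α : ℤ) + 1 ∨ tslab m h i = (α : ℤ) + 2)
    ∧ ((((Finset.range (h / Nat.gcd m h)).filter
          (fun i => tslab m h i = (α : ℤ) + 2)).card : ℤ) = (β : ℤ) - 1)
    ∧ ((((Finset.range (h / Nat.gcd m h)).filter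
          (fun i => tslab m h i = (α : ℤ) + 1)).card : ℤ) =
        ((h / Nat.gcd m h : ℕ) : ℤ) - (β : ℤ) + 1) :=
  slab_overlap_counts_general m h hh α β hαβ hβlt hβ
end

section
/- Let P be the structured dense polygon with parameters (r, l, h, l') and let m, n be positive integers. Let TB be any finite family of thread-blocks of size m×n, each with stretch factor 1 and anchor lying in P, whose covers together contain every point of P. For a positive integer k with k·m ≤ r·h, let λ^(k) be the number of blocks in TB whose anchor row (second coordinate of the anchor) is less than k·m, and let δ^(k) be the number of blocks in TB whose anchor row lies in the interval [(k−1)·m + 1, k·m − 1] (blocks anchored in the first k patches that extend past row k·m − 1). Then λ^(k) − δ^(k) ≥ Σ_{i=0}^{k−1} ⌈w_i/n⌉ − Σ_{i=0}^{k−1} ⌈(w_i − l)/n⌉. -/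
/-- The structured dense polygon with parameters `(r, l, h, l')`. -/
def polygonMask (r l h l' : ℕ) : Set (ℤ × ℤ) :=
  {p | ∃ t y : ℤ, 0 ≤ t ∧ t < l ∧ 0 ≤ y ∧ y < r * h ∧ p = ((y / h) * l' + t, y)}

/-!
Row `i·m` of the polygon (`i < k`) consists of `l` consecutive points. A stretch-1 block
meets that row only if its anchor row lies in `(i·m - m, i·m]`, and then in at most `n`
points, so each such band of anchor rows holds at least `⌈l/n⌉` blocks. The `k` bands are
disjoint and together lie below row `(k-1)·m`, and the blocks anchored there are exactly
those counted by `λ^(k) - δ^(k)`. Finally `⌈w/n⌉ - ⌈(w - l)/n⌉ ≤ ⌈l/n⌉` for every width `w`.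
-/

open Finset

theorem Int.ceil_sub_ceil_sub_le {R : Type*} [Ring R] [LinearOrder R] [IsOrderedRing R]
    [FloorRing R] (x y : R) : ⌈x⌉ - ⌈x - y⌉ ≤ ⌈y⌉ := by
  have := Int.ceil_add_le (x - y) y
  rw [sub_add_cancel] at this
  omega

theorem Int.ceil_natCast_div_le_of_le_mul {K : Type*} [Field K] [LinearOrder K]
    [IsStrictOrderedRing K] [FloorRing K] {a b c : ℕ} (h : a ≤ c * b) :
    ⌈(a : K) / b⌉ ≤ c := by
  rw [Int.ceil_le, Int.cast_natCast]
  exact div_le_of_le_mul₀ b.cast_nonneg c.cast_nonneg (by exact_mod_cast h)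

theorem Comp_one_eq_Ico_prod_Ico (x₀ y₀ : ℤ) (m n : ℕ) :
    Comp x₀ y₀ 1 m n = Set.Ico x₀ (x₀ + n) ×ˢ Set.Ico y₀ (y₀ + m) := by
  ext ⟨x, y⟩
  simp only [Comp, mul_one, Set.mem_ofPred_eq, Set.mem_prod, Set.mem_Ico, Prod.mk.injEq]
  constructor
  · rintro ⟨i, j, hi, hj, rfl, rfl⟩
    omega
  · rintro ⟨⟨hx₀, hx⟩, hy₀, hy⟩
    exact ⟨(x - x₀).toNat, (y - y₀).toNat, by omega, by omega, by omega, by omega⟩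

theorem mem_polygonMask_of_mem_row {r l h l' : ℕ} {x y : ℤ} (hy₀ : 0 ≤ y) (hy : y < r * h)
    (hx : x ∈ Set.Ico (y / h * l') (y / h * l' + l)) : (x, y) ∈ polygonMask r l h l' := by
  obtain ⟨hx₀, hx⟩ := hx
  exact ⟨x - y / h * l', y, by omega, by omega, hy₀, hy, by simp⟩

theorem le_card_mul_of_covers_row {ι : Type*} [Fintype ι] (anchor : ι → ℤ × ℤ)
    {m n l : ℕ} {a y : ℤ}
    (hcov : ∀ x ∈ Set.Ico a (a + l),
      ∃ b, (x, y) ∈ Comp (anchor b).1 (anchor b).2 1 m n) :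
    l ≤ #{b | y - m < (anchor b).2 ∧ (anchor b).2 ≤ y} * n := by
  classical
  set T : Finset ι := {b | y - m < (anchor b).2 ∧ (anchor b).2 ≤ y}
  have hrow : Finset.Ico a (a + l)
      ⊆ T.biUnion fun b => Finset.Ico (anchor b).1 ((anchor b).1 + n) := by
    intro x hx
    obtain ⟨b, hb⟩ := hcov x (by simpa using hx)
    rw [Comp_one_eq_Ico_prod_Ico] at hb
    obtain ⟨⟨hx₀, hx⟩, hy₀, hy⟩ := hb
    simp only [mem_biUnion, Finset.mem_Ico, T, mem_filter, mem_univ, true_and]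
    exact ⟨b, ⟨by omega, hy₀⟩, hx₀, hx⟩
  calc l = #(Finset.Ico a (a + l)) := by simp
    _ ≤ _ := card_le_card hrow
    _ ≤ #T * n := card_biUnion_le_card_mul _ _ _ fun b _ => by simp

theorem sum_card_filter_Ioc_mul_le {ι : Type*} [Fintype ι] (f : ι → ℤ) {m : ℕ} (hm : 0 < m)
    (k : ℕ) :
    ∑ i ∈ range k, #{b | (i : ℤ) * m - m < f b ∧ f b ≤ (i : ℤ) * m}
      ≤ #{b | f b ≤ ((k : ℤ) - 1) * m} := by
  classical
  have hdisj : (range k : Set ℕ).PairwiseDisjoint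
      fun i => univ.filter fun b => (i : ℤ) * m - m < f b ∧ f b ≤ (i : ℤ) * m := by
    intro i _ j _ hij
    refine disjoint_filter.2 fun b _ hi hj => hij ?_
    have hm' : (0 : ℤ) < m := by exact_mod_cast hm
    have : (i : ℤ) < j + 1 := lt_of_mul_lt_mul_right (by linarith) hm'.le
    have : (j : ℤ) < i + 1 := lt_of_mul_lt_mul_right (by linarith) hm'.le
    omega
  rw [← card_biUnion hdisj]
  refine card_le_card fun b hb => ?_
  simp only [mem_biUnion, mem_range, mem_filter, mem_univ, true_and] at hb ⊢
  obtain ⟨i, hi, -, hb⟩ := hb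
  have : (i : ℤ) ≤ k - 1 := by omega
  nlinarith

theorem card_filter_le_eq_card_filter_lt_sub {ι : Type*} [Fintype ι] (f : ι → ℤ) {c d : ℤ}
    (hcd : c < d) :
    (#{b | f b ≤ c} : ℤ) = #{b | f b < d} - #{b | c + 1 ≤ f b ∧ f b ≤ d - 1} := by
  classical
  have hsplit : univ.filter (fun b => f b < d)
      = univ.filter (fun b => f b ≤ c)
        ∪ univ.filter (fun b => c + 1 ≤ f b ∧ f b ≤ d - 1) := by
    ext b
    simp only [mem_filter, mem_univ, true_and, mem_union]
    omega
  rw [hsplit, card_union_of_disjoint (disjoint_filter.2 fun b _ h₁ h₂ => by omega)]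
  push_cast
  ring

theorem poset_tiling_inductive_bound_general
    (r l h l' : ℕ)
    (m n : ℕ) (hm : 0 < m)
    (N : ℕ) (anchor : Fin N → ℤ × ℤ)
    (hcover : ∀ p ∈ polygonMask r l h l',
      ∃ b, p ∈ Comp (anchor b).1 (anchor b).2 1 m n ∩ polygonMask r l h l')
    (k : ℕ) (hkm : k * m ≤ r * h) :
    (∑ i ∈ Finset.range k, ⌈((wpatch m h l l' i : ℚ)) / (n : ℚ)⌉)
      - (∑ i ∈ Finset.range k, ⌈((wpatch m h l l' i : ℚ) - (l : ℚ)) / (n : ℚ)⌉)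
    ≤ ((Finset.univ.filter
          (fun b : Fin N => (anchor b).2 < (k : ℤ) * m)).card : ℤ)
      - ((Finset.univ.filter
          (fun b : Fin N =>
            ((k : ℤ) - 1) * m + 1 ≤ (anchor b).2 ∧ (anchor b).2 ≤ (k : ℤ) * m - 1)).card : ℤ) := by
  have hrow : ∀ i ∈ range k, ⌈(l : ℚ) / n⌉
      ≤ #{b | (i : ℤ) * m - m < (anchor b).2 ∧ (anchor b).2 ≤ (i : ℤ) * m} := by
    intro i hi
    have hy : i * m < r * h := (Nat.mul_lt_mul_of_pos_right (mem_range.1 hi) hm).trans_le hkm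
    refine Int.ceil_natCast_div_le_of_le_mul
      (le_card_mul_of_covers_row anchor (a := (i : ℤ) * m / h * l') fun x hx => ?_)
    exact (hcover _ (mem_polygonMask_of_mem_row (by positivity) (by exact_mod_cast hy) hx)).imp
      fun _ hb => hb.1
  rw [← sum_sub_distrib, ← card_filter_le_eq_card_filter_lt_sub _ (by nlinarith)]
  calc _ ≤ ∑ i ∈ range k, ⌈(l : ℚ) / n⌉ := sum_le_sum fun i _ => by
        simpa only [sub_div] using Int.ceil_sub_ceil_sub_le ((wpatch m h l l' i : ℚ) / n) (l / n)
    _ ≤ ∑ i ∈ range k,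
          (#{b | (i : ℤ) * m - m < (anchor b).2 ∧ (anchor b).2 ≤ (i : ℤ) * m} : ℤ) :=
      sum_le_sum hrow
    _ ≤ _ := by exact_mod_cast sum_card_filter_Ioc_mul_le (fun b => (anchor b).2) hm k

/-- For any stretch-1 tiling of the structured dense polygon by thread-blocks
anchored in the polygon, the number `λ^(k)` of blocks anchored in the first
`k` patches minus the number `δ^(k)` of blocks that overflow out of the first
`k` patches is at least `Σ_{i<k} ⌈w_i/n⌉ − Σ_{i<k} ⌈(w_i − l)/n⌉`. -/
theorem poset_tiling_inductive_bound
    (r l h l' : ℕ) (hr : 0 < r) (hl : 0 < l) (hh : 0 < h)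
    (m n : ℕ) (hm : 0 < m) (hn : 0 < n)
    (N : ℕ) (anchor : Fin N → ℤ × ℤ)
    (hanch : ∀ b, anchor b ∈ polygonMask r l h l')
    (hcover : ∀ p ∈ polygonMask r l h l',
      ∃ b, p ∈ Comp (anchor b).1 (anchor b).2 1 m n ∩ polygonMask r l h l')
    (k : ℕ) (hk : 0 < k) (hkm : k * m ≤ r * h) :
    (∑ i ∈ Finset.range k, ⌈((wpatch m h l l' i : ℚ)) / (n : ℚ)⌉)
      - (∑ i ∈ Finset.range k, ⌈((wpatch m h l l' i : ℚ) - (l : ℚ)) / (n : ℚ)⌉)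
    ≤ ((Finset.univ.filter
          (fun b : Fin N => (anchor b).2 < (k : ℤ) * m)).card : ℤ)
      - ((Finset.univ.filter
          (fun b : Fin N =>
            ((k : ℤ) - 1) * m + 1 ≤ (anchor b).2 ∧ (anchor b).2 ≤ (k : ℤ) * m - 1)).card : ℤ) :=
  poset_tiling_inductive_bound_general r l h l' m n hm N anchor hcover k hkm
end

section
/- Let P be the structured dense polygon with parameters (r, l, h, l'), let m, n be positive integers with m dividing r·h, and let K = r·h/m. Define λ_naive = Σ_{i=0}^{K−1} ⌈w_i/n⌉. Then any finite family of λ thread-blocks of size m×n, each with stretch factor 1 and anchor lying in P, whose covers together contain every point of P, satisfies λ ≥ λ_naive − Σ_{i=0}^{K−1} ⌈(w_i − l)/n⌉; that is, the naive patch-by-patch tiling uses at most Σ_{i=0}^{K−1} ⌈(w_i − l)/n⌉ more thread-blocks than any valid tiling anchored in P. -/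
theorem Finset.sum_ceil_div_sub_sum_ceil_sub_div_le {ι α : Type*} [Field α] [LinearOrder α]
    [IsStrictOrderedRing α] [FloorRing α] (s : Finset ι) (w : ι → α) (a d : α) :
    ∑ i ∈ s, ⌈w i / d⌉ - ∑ i ∈ s, ⌈(w i - a) / d⌉ ≤ s.card * ⌈a / d⌉ := by
  rw [sub_le_iff_le_add, ← nsmul_eq_mul, ← Finset.sum_const, ← Finset.sum_add_distrib]
  refine Finset.sum_le_sum fun i _ => ?_
  calc ⌈w i / d⌉ = ⌈a / d + (w i - a) / d⌉ := by rw [← add_div, add_sub_cancel]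
    _ ≤ ⌈a / d⌉ + ⌈(w i - a) / d⌉ := Int.ceil_add_le _ _

theorem Fintype.card_le_of_forall_mem_block {ι β α : Type*} [Fintype ι] [Fintype β]
    (point : ι → α) (block : β → Set α) (hcover : ∀ i, ∃ b, point i ∈ block b)
    (hsep : ∀ i i' b, point i ∈ block b → point i' ∈ block b → i = i') :
    Fintype.card ι ≤ Fintype.card β := by
  choose f hf using hcover
  exact Fintype.card_le_of_injective f fun i i' hii' => hsep i i' (f i) (hf i) (hii' ▸ hf i')

theorem abs_sub_lt_of_mem_Comp_one {x₀ y₀ : ℤ} {m n : ℕ} {p q : ℤ × ℤ}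
    (hp : p ∈ Comp x₀ y₀ 1 m n) (hq : q ∈ Comp x₀ y₀ 1 m n) :
    |p.1 - q.1| < n ∧ |p.2 - q.2| < m := by
  obtain ⟨i, j, hi, hj, rfl⟩ := hp
  obtain ⟨i', j', hi', hj', rfl⟩ := hq
  simp only [mul_one, add_sub_add_left_eq_sub, abs_sub_lt_iff]
  omega

theorem Int.eq_of_abs_mul_sub_mul_lt {a b n : ℤ} (h : |a * n - b * n| < n) : a = b := by
  have hn : 0 < n := (abs_nonneg _).trans_lt h
  have hzero := Int.eq_zero_of_abs_lt_dvd (dvd_sub (dvd_mul_left n a) (dvd_mul_left n b)) h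
  rw [← sub_mul, mul_eq_zero, sub_eq_zero] at hzero
  exact hzero.resolve_right hn.ne'

def stairPoint (m n h l' : ℕ) (j k : ℕ) : ℤ × ℤ :=
  (((j : ℤ) * m) / h * l' + k * n, j * m)

theorem stairPoint_mem_polygonMask {r l h l' m n K j k : ℕ} (hm : 0 < m) (hn : 0 < n)
    (hKm : K * m = r * h) (hj : j < K) (hk : k < ⌈(l : ℚ) / n⌉₊) :
    stairPoint m n h l' j k ∈ polygonMask r l h l' := by
  have hkn : (k : ℤ) * n < l := by
    rw [Nat.lt_ceil, lt_div_iff₀ (by exact_mod_cast hn)] at hk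
    exact_mod_cast hk
  have hjm : (j : ℤ) * m < r * h := by
    have : j * m < r * h := hKm ▸ Nat.mul_lt_mul_of_pos_right hj hm
    exact_mod_cast this
  exact ⟨k * n, j * m, by positivity, hkn, by positivity, hjm, rfl⟩

theorem stairPoint_eq_of_mem_Comp_one {m n h l' j k j' k' : ℕ} {x₀ y₀ : ℤ}
    (hp : stairPoint m n h l' j k ∈ Comp x₀ y₀ 1 m n)
    (hq : stairPoint m n h l' j' k' ∈ Comp x₀ y₀ 1 m n) : j = j' ∧ k = k' := by
  obtain ⟨hx, hy⟩ := abs_sub_lt_of_mem_Comp_one hp hq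
  have hjj' : j = j' := by exact_mod_cast Int.eq_of_abs_mul_sub_mul_lt hy
  subst hjj'
  refine ⟨rfl, ?_⟩
  simp only [stairPoint, add_sub_add_left_eq_sub] at hx
  exact_mod_cast Int.eq_of_abs_mul_sub_mul_lt hx

theorem mul_ceil_le_of_covers_polygonMask {r l h l' m n K N : ℕ} (hm : 0 < m) (hn : 0 < n)
    (hKm : K * m = r * h) (anchor : Fin N → ℤ × ℤ)
    (hcover : ∀ p ∈ polygonMask r l h l', ∃ b, p ∈ Comp (anchor b).1 (anchor b).2 1 m n) :
    K * ⌈(l : ℚ) / n⌉₊ ≤ N := by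
  simpa using Fintype.card_le_of_forall_mem_block
    (fun jk : Fin K × Fin ⌈(l : ℚ) / n⌉₊ => stairPoint m n h l' jk.1 jk.2)
    (fun b => Comp (anchor b).1 (anchor b).2 1 m n)
    (fun jk => hcover _ (stairPoint_mem_polygonMask hm hn hKm jk.1.isLt jk.2.isLt))
    (fun jk jk' _ hp hq => by
      obtain ⟨hj, hk⟩ := stairPoint_eq_of_mem_Comp_one hp hq
      exact Prod.ext (Fin.ext hj) (Fin.ext hk))

theorem naive_tiling_near_optimal_general
    (r l h l' : ℕ)
    (m n : ℕ) (hm : 0 < m) (hn : 0 < n)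
    (hdvd : m ∣ r * h) (K : ℕ) (hK : K = r * h / m)
    (N : ℕ) (anchor : Fin N → ℤ × ℤ)
    (hcover : ∀ p ∈ polygonMask r l h l',
      ∃ b, p ∈ Comp (anchor b).1 (anchor b).2 1 m n ∩ polygonMask r l h l') :
    (∑ i ∈ Finset.range K, ⌈((wpatch m h l l' i : ℚ)) / (n : ℚ)⌉)
      - (∑ i ∈ Finset.range K, ⌈((wpatch m h l l' i : ℚ) - (l : ℚ)) / (n : ℚ)⌉)
    ≤ (N : ℤ) := by
  have hKm : K * m = r * h := hK ▸ Nat.div_mul_cancel hdvd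
  have hblocks := mul_ceil_le_of_covers_polygonMask hm hn hKm anchor
    fun p hp => (hcover p hp).imp fun _ hb => hb.1
  calc _ ≤ ((Finset.range K).card : ℤ) * ⌈(l : ℚ) / n⌉ :=
        Finset.sum_ceil_div_sub_sum_ceil_sub_div_le _ _ _ _
    _ = ((K * ⌈(l : ℚ) / n⌉₊ : ℕ) : ℤ) := by
        rw [Finset.card_range, Nat.cast_mul, Int.natCast_ceil_eq_ceil (by positivity)]
    _ ≤ N := by exact_mod_cast hblocks

/-- The naive patch-by-patch tiling count `λ_naive = Σ_{i<K} ⌈w_i/n⌉` exceeds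
the count of any valid stretch-1 tiling anchored in the polygon by at most
`Σ_{i<K} ⌈(w_i − l)/n⌉`. -/
theorem naive_tiling_near_optimal
    (r l h l' : ℕ) (hr : 0 < r) (hl : 0 < l) (hh : 0 < h)
    (m n : ℕ) (hm : 0 < m) (hn : 0 < n)
    (hdvd : m ∣ r * h) (K : ℕ) (hK : K = r * h / m)
    (N : ℕ) (anchor : Fin N → ℤ × ℤ)
    (hanch : ∀ b, anchor b ∈ polygonMask r l h l')
    (hcover : ∀ p ∈ polygonMask r l h l',
      ∃ b, p ∈ Comp (anchor b).1 (anchor b).2 1 m n ∩ polygonMask r l h l') :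
    (∑ i ∈ Finset.range K, ⌈((wpatch m h l l' i : ℚ)) / (n : ℚ)⌉)
      - (∑ i ∈ Finset.range K, ⌈((wpatch m h l l' i : ℚ) - (l : ℚ)) / (n : ℚ)⌉)
    ≤ (N : ℤ) :=
  naive_tiling_near_optimal_general r l h l' m n hm hn hdvd K hK N anchor hcover
end
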